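/- Let G be a 0-dimensional local Gorenstein K-algebra, J ⊂ G a nonzero ideal with J ⊆ (0 : J), and R = G/J. Then the ideal I = (0 : J)/J of R satisfies I ≅ Hom_K(I, K) as R-modules; that is, I is a symmetric ideal of R. -/

import Mathlib

/-!
The Gorenstein duality `e` is an invariant pairing `B(ab, c) = B(b, ac)` on `G`; it is symmetric
and nondegenerate. Under `B` the orthogonal of an ideal `J` is its annihilator `A = (0 : J)`, hence
by dimension count `A^⊥ = J`. So `B` restricted to `A` has radical `A ∩ J`, which is the kernel of
`A → I = (A + J)/J`, and `B` descends to a perfect pairing on `I`; invariance of `B` makes the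
resulting isomorphism `I ≅ Hom_K(I, K)` linear over `G/J`.
-/

/-- A 0-dimensional (finite-dimensional) local `K`-algebra `G` is Gorenstein iff
`G ≅ ω_G = Hom_K(G,K)` as `G`-modules, where the `G`-action on the dual is
`(a•ψ)(b) = ψ(a*b)`. -/
def IsGorensteinLocalAlgebra (K G : Type*) [Field K] [CommRing G] [Algebra K G] : Prop :=
  ∃ e : G ≃ₗ[K] (G →ₗ[K] K), ∀ a b c : G, e (a * b) c = e b (a * c)

theorem LinearMap.exists_linearEquiv_dual_of_surjective {K V W : Type*} [Field K]
    [AddCommGroup V] [Module K V] [AddCommGroup W] [Module K W] [FiniteDimensional K W]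
    (π : V →ₗ[K] W) (hπ : Function.Surjective π) (β : V →ₗ[K] V →ₗ[K] K)
    (hleft : ∀ x y, π x = 0 → β x y = 0) (hright : ∀ x y, π y = 0 → β x y = 0)
    (hrad : ∀ x, (∀ y, β x y = 0) → π x = 0) :
    ∃ Φ : W ≃ₗ[K] (W →ₗ[K] K), ∀ x y, Φ (π x) (π y) = β x y := by
  obtain ⟨σ, hσ⟩ := π.exists_rightInverse_of_surjective (range_eq_top.2 hπ)
  have hπσ (x : V) : π (σ (π x) - x) = 0 := by
    rw [map_sub, ← comp_apply π σ, hσ, id_apply, sub_self]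
  set Φ := β.compl₁₂ σ σ
  have hΦ (x y : V) : Φ (π x) (π y) = β x y := by
    have hl := hleft _ (σ (π y)) (hπσ x)
    have hr := hright x _ (hπσ y)
    simp only [map_sub, sub_apply, sub_eq_zero] at hl hr
    rw [compl₁₂_apply, hl, hr]
  have hinj : Function.Injective Φ := by
    refine (injective_iff_map_eq_zero Φ).2 fun w hw => ?_
    obtain ⟨x, rfl⟩ := hπ w
    exact hrad x fun y => by rw [← hΦ, hw, zero_apply]
  exact ⟨Φ.linearEquivOfInjective hinj (Subspace.dual_finrank_eq (V := W)).symm, hΦ⟩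

namespace LinearMap.BilinForm

section CommSemiring

variable {R G : Type*} [CommSemiring R] [CommSemiring G] [Algebra R G]
  {B : LinearMap.BilinForm R G}

theorem isSymm_of_mul_invariant (hB : ∀ a b c, B (a * b) c = B b (a * c)) : B.IsSymm where
  eq x y := calc
    B x y = B 1 (x * y) := by simpa using hB x 1 y
    _ = B y x := by simpa [mul_comm] using (hB y 1 x).symm

theorem orthogonal_restrictScalars_ideal (hB : ∀ a b c, B (a * b) c = B b (a * c))
    (hB₀ : Function.Injective B) (J : Ideal G) :
    B.orthogonal (J.restrictScalars R) = ((⊥ : Ideal G).colon J).restrictScalars R := by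
  ext m
  simp only [mem_orthogonal_iff, Submodule.restrictScalars_mem, Submodule.mem_colon,
    smul_eq_mul, Ideal.mem_bot]
  constructor
  · intro hm j hj
    refine hB₀ (LinearMap.ext fun c => ?_)
    rw [hB, mul_comm, ← hB, hm _ (J.mul_mem_left c hj), map_zero, LinearMap.zero_apply]
  · intro hm j hj
    rw [← mul_one m, ← hB, hm j hj, map_zero, LinearMap.zero_apply]

end CommSemiring

variable {K G : Type*} [Field K] [CommRing G] [Algebra K G] {B : LinearMap.BilinForm K G}

theorem orthogonal_restrictScalars_colon [FiniteDimensional K G]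
    (hB : ∀ a b c, B (a * b) c = B b (a * c)) (hB₀ : Function.Injective B) (J : Ideal G) :
    B.orthogonal (((⊥ : Ideal G).colon J).restrictScalars K) = J.restrictScalars K := by
  have hrefl := (isSymm_of_mul_invariant hB).isRefl
  have hnd : B.Nondegenerate := hrefl.nondegenerate_iff_separatingLeft.2 <|
    separatingLeft_iff_ker_eq_bot.2 (ker_eq_bot.2 hB₀)
  rw [← orthogonal_restrictScalars_ideal hB hB₀, orthogonal_orthogonal hnd hrefl]

end LinearMap.BilinForm

namespace Ideal.Quotient

variable {R G : Type*} [CommSemiring R] [CommRing G] [Algebra R G]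

def mkRestrict (J A : Ideal G) : A.restrictScalars R →ₗ[R] A.map (mk J) where
  toFun x := ⟨mk J (x : G), mem_map_of_mem _ x.2⟩
  map_add' x y := Subtype.ext (map_add (mk J) (x : G) y)
  map_smul' c x := Subtype.ext (map_smul (mkₐ R J) c (x : G))

theorem mkRestrict_surjective (J A : Ideal G) :
    Function.Surjective (mkRestrict (R := R) J A) := by
  rintro ⟨y, hy⟩
  obtain ⟨x, hx, rfl⟩ := (mem_map_iff_of_surjective _ mk_surjective).1 hy
  exact ⟨⟨x, hx⟩, rfl⟩

theorem mkRestrict_eq_zero_iff {J A : Ideal G} {x : A.restrictScalars R} :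
    mkRestrict (R := R) J A x = 0 ↔ (x : G) ∈ J :=
  Subtype.ext_iff.trans eq_zero_iff_mem

theorem mkRestrict_mul (J A : Ideal G) (g : G) (x : A.restrictScalars R) :
    mkRestrict (R := R) J A ⟨g * x, A.mul_mem_left g x.2⟩ = mk J g • mkRestrict J A x :=
  Subtype.ext (map_mul (mk J) g (x : G))

end Ideal.Quotient

theorem stmt2_general (K G : Type*) [Field K] [CommRing G] [Algebra K G]
    [FiniteDimensional K G]
    (hGor : IsGorensteinLocalAlgebra K G)
    (J : Ideal G) :
    ∃ e : (((⊥ : Ideal G).colon J).map (Ideal.Quotient.mk J)) ≃ₗ[K]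
        ((((⊥ : Ideal G).colon J).map (Ideal.Quotient.mk J)) →ₗ[K] K),
      ∀ (a : G ⧸ J) (x y : (((⊥ : Ideal G).colon J).map (Ideal.Quotient.mk J))),
        e (a • x) y = e x (a • y) := by
  obtain ⟨e, he⟩ := hGor
  set B : LinearMap.BilinForm K G := e.toLinearMap
  have hsymm := (LinearMap.BilinForm.isSymm_of_mul_invariant (B := B) he).eq
  have hJA := LinearMap.BilinForm.orthogonal_restrictScalars_ideal (B := B) he e.injective J
  have hAJ := LinearMap.BilinForm.orthogonal_restrictScalars_colon (B := B) he e.injective J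
  have hπ := Ideal.Quotient.mkRestrict_surjective (R := K) J ((⊥ : Ideal G).colon J)
  obtain ⟨Φ, hΦ⟩ := LinearMap.exists_linearEquiv_dual_of_surjective _ hπ (B.domRestrict₁₂ _ _)
    (fun x y hx => hJA.ge y.2 x (Ideal.Quotient.mkRestrict_eq_zero_iff.1 hx))
    (fun x y hy => (hsymm _ _).trans (hJA.ge x.2 y (Ideal.Quotient.mkRestrict_eq_zero_iff.1 hy)))
    (fun x hx => Ideal.Quotient.mkRestrict_eq_zero_iff.2 <|
      hAJ.le fun n hn => (hsymm _ _).trans (hx ⟨n, hn⟩))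
  refine ⟨Φ, fun a x y => ?_⟩
  obtain ⟨g, rfl⟩ := Ideal.Quotient.mk_surjective a
  obtain ⟨x, rfl⟩ := hπ x
  obtain ⟨y, rfl⟩ := hπ y
  rw [← Ideal.Quotient.mkRestrict_mul, ← Ideal.Quotient.mkRestrict_mul, hΦ, hΦ]
  exact he g x y

/-- Let `G` be a 0-dimensional local Gorenstein `K`-algebra, `J ⊆ G` a nonzero ideal with
`J ⊆ (0 : J)`, and `R = G/J`.  Then the ideal `I = (0 : J)/J` of `R` is symmetric, i.e.
`I ≅ Hom_K(I,K)` as `R`-modules (the `R`-action on the dual being `(a•φ)(x) = φ(a•x)`). -/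
theorem stmt2 (K G : Type*) [Field K] [CommRing G] [Algebra K G]
    [IsLocalRing G] [FiniteDimensional K G]
    (hGor : IsGorensteinLocalAlgebra K G)
    (J : Ideal G) (hJne : J ≠ ⊥)
    (hJann : J ≤ (⊥ : Ideal G).colon J) :
    ∃ e : (((⊥ : Ideal G).colon J).map (Ideal.Quotient.mk J)) ≃ₗ[K]
        ((((⊥ : Ideal G).colon J).map (Ideal.Quotient.mk J)) →ₗ[K] K),
      ∀ (a : G ⧸ J) (x y : (((⊥ : Ideal G).colon J).map (Ideal.Quotient.mk J))),
        e (a • x) y = e x (a • y) :=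
  stmt2_general K G hGor J
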